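/- Let G be a convex φ-function on [0,∞) such that for every measurable f on [0,1], ‖f‖_{1,G} = ‖f‖_{L¹}. Then G(t) = t for all t ≥ 0. -/

import Mathlib

open MeasureTheory Set

/-- A φ-function: continuous, strictly increasing on `[0,∞)`, `F(0)=0`, `F(1)=1`,
`F(t) → ∞`. -/
structure IsPhiFun (F : ℝ → ℝ) : Prop where
  cont : ContinuousOn F (Ici 0)
  strictMono : StrictMonoOn F (Ici 0)
  zero : F 0 = 0
  one : F 1 = 1
  tendsto : Filter.Tendsto F Filter.atTop Filter.atTop

/-- `F̃(t) = 1/F(1/t)` for `t > 0`, and `F̃(0) = 0`. -/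
noncomputable def phiTilde (F : ℝ → ℝ) (t : ℝ) : ℝ :=
  if 0 < t then (F t⁻¹)⁻¹ else 0

/-- The non-increasing rearrangement of `f` (measured on `[0,1]`). -/
noncomputable def decRearr (f : ℝ → ℝ) (x : ℝ) : ℝ :=
  sSup {t : ℝ | x ≤ (volume {y ∈ Icc (0:ℝ) 1 | t ≤ |f y|}).toReal}

/-- The Luxemburg norm on `[0,1]` associated with `G`. -/
noncomputable def luxNorm (G : ℝ → ℝ) (g : ℝ → ℝ) : ℝ :=
  sInf {c : ℝ | 0 < c ∧ ∫ x in Icc (0:ℝ) 1, G (|g x| / c) ≤ 1}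

/-- The Orlicz–Lorentz functional `‖f‖_{F,G} = ‖ f* ∘ F̃ ∘ G̃⁻¹ ‖_G`. -/
noncomputable def olNorm (F G : ℝ → ℝ) (f : ℝ → ℝ) : ℝ :=
  luxNorm G (fun x => decRearr f (phiTilde F (Function.invFun (phiTilde G) x)))

/-!
Test the hypothesis on the decreasing step functions `f` equal to `v₁` on `[0,u₁]`, to `v₂`
on `(u₁,u₂]` and to `0` after, normalised by `‖f‖₁ = 1`. Such an `f` is its own
rearrangement, and `f* ∘ G̃⁻¹` is the step function with the same values and breakpoints
`G̃ u₁`, `G̃ u₂`, so its Luxemburg norm is `1` exactly when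
`G̃ u₁ G v₁ + (G̃ u₂ - G̃ u₁) G v₂ = 1`. Two-step functions together with convexity give
`G = id` on `[0,1]`, and then show that on every `[1,s]` the function `G` is its chord. One
three-step function forces `G 2 = 2`, and the chords through `(2,2)` are the identity.
-/

namespace IsPhiFun

variable {G : ℝ → ℝ}

lemma pos (hG : IsPhiFun G) {t : ℝ} (ht : 0 < t) : 0 < G t := by
  simpa [hG.zero] using hG.strictMono (le_refl (0:ℝ)) ht.le ht

lemma exists_pos_eq (hG : IsPhiFun G) {y : ℝ} (hy : 0 < y) : ∃ s, 0 < s ∧ G s = y := by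
  obtain ⟨M, hM⟩ := (hG.tendsto.eventually_ge_atTop y).exists_forall_of_atTop
  obtain ⟨s, hs, rfl⟩ := intermediate_value_Icc (le_max_right M 0)
    (hG.cont.mono fun _ hx => hx.1) ⟨by rw [hG.zero]; exact hy.le, hM _ (le_max_left _ _)⟩
  refine ⟨s, hs.1.lt_of_ne ?_, rfl⟩
  rintro rfl
  exact hy.ne' hG.zero

lemma phiTilde_strictMonoOn (hG : IsPhiFun G) : StrictMonoOn (phiTilde G) (Ioi 0) := by
  intro a (ha : 0 < a) b (hb : 0 < b) hab
  simp only [phiTilde, if_pos ha, if_pos hb]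
  exact inv_strictAnti₀ (hG.pos (inv_pos.2 hb))
    (hG.strictMono (inv_pos.2 hb).le (inv_pos.2 ha).le (inv_strictAnti₀ ha hab))

lemma phiTilde_pos (hG : IsPhiFun G) {t : ℝ} (ht : 0 < t) : 0 < phiTilde G t := by
  simpa [phiTilde, ht] using hG.pos (inv_pos.2 ht)

lemma phiTilde_one (hG : IsPhiFun G) : phiTilde G 1 = 1 := by
  simp [phiTilde, hG.one]

lemma invFun_phiTilde (hG : IsPhiFun G) {x : ℝ} (hx : 0 < x) :
    0 < Function.invFun (phiTilde G) x ∧ phiTilde G (Function.invFun (phiTilde G) x) = x := by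
  obtain ⟨s, hs, hGs⟩ := hG.exists_pos_eq (inv_pos.2 hx)
  have hx' : phiTilde G (Function.invFun (phiTilde G) x) = x :=
    Function.invFun_eq ⟨s⁻¹, by simp [phiTilde, hs, hGs]⟩
  refine ⟨?_, hx'⟩
  by_contra hle
  simp [phiTilde, hle, hx.ne] at hx'

end IsPhiFun

lemma phiTilde_id {t : ℝ} (ht : 0 < t) : phiTilde (fun s => s) t = t := by
  simp [phiTilde, ht]

lemma volume_real_Icc_inter_Iic (ℓ : ℝ) :
    volume.real (Icc (0:ℝ) 1 ∩ Iic ℓ) = max (min 1 ℓ) 0 := by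
  rw [← Ici_inter_Iic, inter_assoc, Iic_inter_Iic, Ici_inter_Iic, Real.volume_real_Icc, sub_zero]

lemma decRearr_eq_abs_of_gc {f ℓ : ℝ → ℝ}
    (hgc : ∀ y ∈ Icc (0:ℝ) 1, ∀ t, t ≤ |f y| ↔ y ≤ ℓ t) {x : ℝ} (hx : x ∈ Ioc (0:ℝ) 1) :
    decRearr f x = |f x| := by
  have hlevel : ∀ t, {y ∈ Icc (0:ℝ) 1 | t ≤ |f y|} = Icc 0 1 ∩ Iic (ℓ t) := by
    intro t
    ext y
    exact and_congr_right fun hy => hgc y hy t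
  have hset : {t : ℝ | x ≤ (volume {y ∈ Icc (0:ℝ) 1 | t ≤ |f y|}).toReal} = Iic |f x| := by
    ext t
    rw [mem_ofPred_eq, ← measureReal_def, hlevel, volume_real_Icc_inter_Iic, mem_Iic,
      hgc x (Ioc_subset_Icc_self hx)]
    obtain ⟨hx0, hx1⟩ := hx
    simp only [le_max_iff, le_min_iff, hx1, true_and, not_le.2 hx0, or_false]
  rw [decRearr, hset, csSup_Iic]

noncomputable def step (u₁ u₂ v₁ v₂ : ℝ) (y : ℝ) : ℝ :=
  if y ≤ u₁ then v₁ else if y ≤ u₂ then v₂ else 0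

section step

variable {u₁ u₂ v₁ v₂ : ℝ}

lemma measurable_step : Measurable (step u₁ u₂ v₁ v₂) :=
  Measurable.ite measurableSet_Iic measurable_const
    (Measurable.ite measurableSet_Iic measurable_const measurable_const)

lemma comp_step {h : ℝ → ℝ} (h0 : h 0 = 0) (y : ℝ) :
    h (step u₁ u₂ v₁ v₂ y) = step u₁ u₂ (h v₁) (h v₂) y := by
  unfold step
  split_ifs <;> simp [h0]

lemma step_nonneg (hv₁ : 0 ≤ v₁) (hv₂ : 0 ≤ v₂) (y : ℝ) : 0 ≤ step u₁ u₂ v₁ v₂ y := by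
  unfold step
  split_ifs <;> linarith

lemma step_comp_of_strictMonoOn {φ : ℝ → ℝ} {s : Set ℝ} (hφ : StrictMonoOn φ s)
    (hu₁ : u₁ ∈ s) (hu₂ : u₂ ∈ s) {y : ℝ} (hy : y ∈ s) :
    step u₁ u₂ v₁ v₂ y = step (φ u₁) (φ u₂) v₁ v₂ (φ y) := by
  simp only [step, hφ.le_iff_le hy hu₁, hφ.le_iff_le hy hu₂]

lemma step_eq_indicator (hu : u₁ ≤ u₂) :
    step u₁ u₂ v₁ v₂ =
      (Iic u₁).indicator (fun _ => v₁ - v₂) + (Iic u₂).indicator (fun _ => v₂) := by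
  ext y
  simp only [step, Pi.add_apply, indicator, mem_Iic]
  split_ifs <;> linarith

lemma integral_step (hu₁ : 0 ≤ u₁) (hu : u₁ ≤ u₂) (hu₂ : u₂ ≤ 1) :
    ∫ y in Icc (0:ℝ) 1, step u₁ u₂ v₁ v₂ y = u₁ * v₁ + (u₂ - u₁) * v₂ := by
  have hint : ∀ (u c : ℝ), 0 ≤ u → u ≤ 1 →
      ∫ y in Icc (0:ℝ) 1, (Iic u).indicator (fun _ => c) y = u * c := by
    intro u c h0 h1
    rw [setIntegral_indicator measurableSet_Iic, setIntegral_const, smul_eq_mul,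
      volume_real_Icc_inter_Iic, min_eq_right h1, max_eq_left h0]
  rw [step_eq_indicator hu, Pi.add_def, integral_add, hint _ _ hu₁ (hu.trans hu₂),
    hint _ _ (hu₁.trans hu) hu₂]
  · ring
  all_goals
    refine (integrable_indicator_iff measurableSet_Iic).2 (integrableOn_const ?_)
    rw [Measure.restrict_apply measurableSet_Iic]
    exact ((measure_mono inter_subset_right).trans_lt measure_Icc_lt_top).ne

lemma decRearr_step (hu : u₁ ≤ u₂) (hv₂ : 0 ≤ v₂) (hv : v₂ ≤ v₁) {x : ℝ}
    (hx : x ∈ Ioc (0:ℝ) 1) : decRearr (step u₁ u₂ v₁ v₂) x = step u₁ u₂ v₁ v₂ x := by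
  have habs : ∀ y, |step u₁ u₂ v₁ v₂ y| = step u₁ u₂ v₁ v₂ y :=
    fun y => abs_of_nonneg (step_nonneg (hv₂.trans hv) hv₂ y)
  rw [← habs]
  -- the superlevel set `{y ∈ [0,1] | t ≤ step y}` is `[0,1] ∩ (-∞, ℓ t]`
  refine decRearr_eq_abs_of_gc
    (ℓ := fun t => if t ≤ 0 then 1 else if t ≤ v₂ then u₂ else if t ≤ v₁ then u₁ else -1)
    (fun y hy t => ?_) hx
  rw [habs]
  obtain ⟨hy0, hy1⟩ := hy
  unfold step
  split_ifs <;> constructor <;> intro <;> linarith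

end step

lemma eq_of_sInf_sublevel_eq {Φ : ℝ → ℝ} {N r : ℝ} (hΦ : AntitoneOn Φ (Ioi 0))
    (hcont : ContinuousAt Φ N) (hN : 0 < N) (hinf : sInf {c | 0 < c ∧ Φ c ≤ r} = N) :
    Φ N = r := by
  set S := {c | 0 < c ∧ Φ c ≤ r}
  have hbdd : BddBelow S := ⟨0, fun c hc => hc.1.le⟩
  have hne : S.Nonempty := by
    by_contra hS
    rw [not_nonempty_iff_eq_empty.1 hS, Real.sInf_empty] at hinf
    exact hN.ne hinf
  have hright : ∀ c, N < c → Φ c ≤ r := by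
    intro c hc
    obtain ⟨s, hs, hsc⟩ := (csInf_lt_iff hbdd hne).1 (hinf ▸ hc)
    exact (hΦ hs.1 (hs.1.trans hsc) hsc.le).trans hs.2
  have hleft : ∀ c ∈ Ioo 0 N, r < Φ c := by
    intro c hc
    by_contra hle
    exact (hinf ▸ csInf_le hbdd ⟨hc.1, not_lt.1 hle⟩).not_gt hc.2
  apply le_antisymm
  · exact le_of_tendsto (hcont.tendsto.mono_left nhdsWithin_le_nhds)
      (eventually_nhdsWithin_of_forall (s := Ioi N) hright)
  · exact ge_of_tendsto (hcont.tendsto.mono_left nhdsWithin_le_nhds)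
      (Filter.mem_of_superset (Ioo_mem_nhdsLT hN) fun c hc => (hleft c hc).le)

lemma luxNorm_congr {G g g' : ℝ → ℝ} (hg : ∀ x ∈ Ioc (0:ℝ) 1, g x = g' x) :
    luxNorm G g = luxNorm G g' := by
  unfold luxNorm
  congr! 4 with c
  rw [integral_Icc_eq_integral_Ioc, integral_Icc_eq_integral_Ioc,
    setIntegral_congr_fun measurableSet_Ioc fun x hx => by rw [hg x hx]]

lemma ConvexOn.le_self_of_mem_Icc {G : ℝ → ℝ} (hconv : ConvexOn ℝ (Ici 0) G) (h0 : G 0 = 0)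
    (h1 : G 1 = 1) {a : ℝ} (ha : a ∈ Icc (0:ℝ) 1) : G a ≤ a := by
  have := hconv.2 (mem_Ici.2 zero_le_one) (mem_Ici.2 le_rfl) ha.1 (sub_nonneg.2 ha.2)
    (add_sub_cancel a 1)
  simpa [h0, h1] using this

def OLNormEqL1 (G : ℝ → ℝ) : Prop :=
  ∀ f : ℝ → ℝ, Measurable f → olNorm (fun t => t) G f = ∫ x in Icc (0:ℝ) 1, |f x|

namespace IsPhiFun

variable {G : ℝ → ℝ}

lemma olNorm_id_step (hG : IsPhiFun G) {u₁ u₂ v₁ v₂ : ℝ} (hu₁ : 0 < u₁) (hu : u₁ ≤ u₂)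
    (hv₂ : 0 ≤ v₂) (hv : v₂ ≤ v₁) :
    olNorm (fun t => t) G (step u₁ u₂ v₁ v₂) =
      luxNorm G (step (phiTilde G u₁) (phiTilde G u₂) v₁ v₂) := by
  refine luxNorm_congr fun x ⟨hx0, hx1⟩ => ?_
  obtain ⟨hT, hTx⟩ := hG.invFun_phiTilde hx0
  set T := Function.invFun (phiTilde G) x
  have hT1 : T ≤ 1 := by
    rwa [← hG.phiTilde_strictMonoOn.le_iff_le hT (mem_Ioi.2 one_pos), hTx, hG.phiTilde_one]
  rw [phiTilde_id hT, decRearr_step hu hv₂ hv ⟨hT, hT1⟩,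
    step_comp_of_strictMonoOn hG.phiTilde_strictMonoOn hu₁ (hu₁.trans_le hu) hT, hTx]

lemma antitoneOn_comp_div (hG : IsPhiFun G) {v : ℝ} (hv : 0 ≤ v) :
    AntitoneOn (fun c => G (v / c)) (Ioi 0) := fun a (ha : 0 < a) b (hb : 0 < b) hab =>
  hG.strictMono.monotoneOn (div_nonneg hv hb.le) (div_nonneg hv ha.le)
    (div_le_div_of_nonneg_left hv ha hab)

lemma continuousAt_comp_div (hG : IsPhiFun G) {v c : ℝ} (hv : 0 < v) (hc : 0 < c) :
    ContinuousAt (fun c => G (v / c)) c :=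
  (hG.cont.continuousAt (Ici_mem_nhds (div_pos hv hc))).comp
    (continuousAt_const.div continuousAt_id hc.ne')

lemma step_identity (hG : IsPhiFun G) (h : OLNormEqL1 G) {u₁ u₂ v₁ v₂ : ℝ} (hu₁ : 0 < u₁)
    (hu : u₁ ≤ u₂) (hu₂ : u₂ ≤ 1) (hv₂ : 0 < v₂) (hv : v₂ ≤ v₁)
    (hnorm : u₁ * v₁ + (u₂ - u₁) * v₂ = 1) :
    phiTilde G u₁ * G v₁ + (phiTilde G u₂ - phiTilde G u₁) * G v₂ = 1 := by
  have hu₂' : 0 < u₂ := hu₁.trans_le hu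
  set w₁ := phiTilde G u₁
  set w₂ := phiTilde G u₂
  have hw₁ : 0 < w₁ := hG.phiTilde_pos hu₁
  have hw : w₁ ≤ w₂ := (hG.phiTilde_strictMonoOn.le_iff_le hu₁ hu₂').2 hu
  have hw₂ : w₂ ≤ 1 := by
    rw [← hG.phiTilde_one]
    exact (hG.phiTilde_strictMonoOn.le_iff_le hu₂' (mem_Ioi.2 one_pos)).2 hu₂
  have habs : ∀ a b x, |step a b v₁ v₂ x| = step a b v₁ v₂ x :=
    fun a b x => abs_of_nonneg (step_nonneg (hv₂.le.trans hv) hv₂.le x)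
  set Φ := fun c => w₁ * G (v₁ / c) + (w₂ - w₁) * G (v₂ / c)
  have hΦ : ∀ c, 0 < c → ∫ x in Icc (0:ℝ) 1, G (|step w₁ w₂ v₁ v₂ x| / c) = Φ c := by
    intro c hc
    simp_rw [habs, comp_step (h := fun y => G (y / c)) (by simp [hG.zero])]
    rw [integral_step hw₁.le hw hw₂]
  have hlux : luxNorm G (step w₁ w₂ v₁ v₂) = 1 := by
    rw [← hG.olNorm_id_step hu₁ hu hv₂.le hv, h _ measurable_step]
    simp_rw [habs]
    rw [integral_step hu₁.le hu hu₂, hnorm]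
  have hanti : AntitoneOn Φ (Ioi 0) := fun a ha b hb hab =>
    add_le_add
      (mul_le_mul_of_nonneg_left (hG.antitoneOn_comp_div (hv₂.trans_le hv).le ha hb hab) hw₁.le)
      (mul_le_mul_of_nonneg_left (hG.antitoneOn_comp_div hv₂.le ha hb hab) (sub_nonneg.2 hw))
  have hcont : ContinuousAt Φ 1 :=
    ((hG.continuousAt_comp_div (hv₂.trans_le hv) one_pos).const_mul _).add
      ((hG.continuousAt_comp_div hv₂ one_pos).const_mul _)
  have hsublevel : sInf {c | 0 < c ∧ Φ c ≤ 1} = 1 := by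
    refine (congrArg sInf (Set.ext fun c => and_congr_right fun hc => ?_)).trans hlux
    rw [hΦ c hc]
  simpa [Φ] using eq_of_sInf_sublevel_eq hanti hcont one_pos hsublevel


lemma one_lt_apply (hG : IsPhiFun G) {t : ℝ} (ht : 1 < t) : 1 < G t :=
  hG.one ▸ hG.strictMono (mem_Ici.2 zero_le_one) (mem_Ici.2 (zero_le_one.trans ht.le)) ht

lemma two_step_identity (hG : IsPhiFun G) (h : OLNormEqL1 G) {s v₁ v₂ : ℝ} (hs : 1 < s)
    (hv₂ : 0 < v₂) (hv : v₂ ≤ v₁) (hnorm : v₁ + (s - 1) * v₂ = s) :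
    G v₁ + (G s - 1) * G v₂ = G s := by
  have hs₀ : 0 < s := one_pos.trans hs
  have key := hG.step_identity h (inv_pos.2 hs₀) (inv_le_one_of_one_le₀ hs.le) le_rfl hv₂ hv
    (by field_simp; linarith)
  rw [hG.phiTilde_one, phiTilde, if_pos (inv_pos.2 hs₀), inv_inv] at key
  have hGs : G s ≠ 0 := (hG.pos hs₀).ne'
  field_simp at key
  linarith

lemma eq_self_of_mem_Icc (hG : IsPhiFun G) (hconv : ConvexOn ℝ (Ici 0) G) (h : OLNormEqL1 G)
    {a : ℝ} (ha : a ∈ Icc (0:ℝ) 1) : G a = a := by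
  refine le_antisymm (hconv.le_self_of_mem_Icc hG.zero hG.one ha) ?_
  rcases ha.1.eq_or_lt with rfl | ha₀
  · exact hG.zero.ge
  have key := hG.two_step_identity h (v₁ := 2 - a) one_lt_two ha₀ (by linarith [ha.2]) (by ring)
  have hconv₂ : G (a * 1 + (1 - a) * 2) ≤ a * G 1 + (1 - a) * G 2 :=
    hconv.2 (mem_Ici.2 zero_le_one) (mem_Ici.2 zero_le_two) ha₀.le (sub_nonneg.2 ha.2)
      (add_sub_cancel a 1)
  rw [show a * 1 + (1 - a) * 2 = 2 - a by ring, hG.one, mul_one] at hconv₂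
  have hG₂ := hG.one_lt_apply one_lt_two
  have : (G 2 - 1) * a ≤ (G 2 - 1) * G a := by linarith
  exact le_of_mul_le_mul_left this (sub_pos.2 hG₂)

lemma chord_identity (hG : IsPhiFun G) (h : OLNormEqL1 G) (hid : ∀ a ∈ Icc (0:ℝ) 1, G a = a)
    {s t : ℝ} (hs : 1 < s) (ht : t ∈ Icc 1 s) : (s - 1) * G t = (s - t) + (t - 1) * G s := by
  rcases ht.2.eq_or_lt with rfl | hts
  · ring
  have hs₁ : 0 < s - 1 := sub_pos.2 hs
  set a := (s - t) / (s - 1) with ha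
  have ha₀ : 0 < a := div_pos (sub_pos.2 hts) hs₁
  have ha₁ : a ≤ 1 := (div_le_one hs₁).2 (by linarith [ht.1])
  have hsa : (s - 1) * a = s - t := mul_div_cancel₀ _ hs₁.ne'
  have key := hG.two_step_identity h hs ha₀ (ha₁.trans ht.1) (by linarith)
  rw [hid a ⟨ha₀.le, ha₁⟩] at key
  linear_combination (s - 1) * key - (G s - 1) * hsa

-- `G` is affine on `[1,2]`, and this three-step identity is quadratic in `G 2` with roots `1`, `2`.
lemma apply_two (hG : IsPhiFun G) (h : OLNormEqL1 G) (hid : ∀ a ∈ Icc (0:ℝ) 1, G a = a) :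
    G 2 = 2 := by
  have key := hG.step_identity h (u₁ := 1/2) (u₂ := 2/3) (v₁ := 5/3) (v₂ := 1)
    (by norm_num) (by norm_num) (by norm_num) (by norm_num) (by norm_num) (by norm_num)
  have h₅₃ := hG.chord_identity h hid one_lt_two (t := 5/3) ⟨by norm_num, by norm_num⟩
  have h₃₂ := hG.chord_identity h hid one_lt_two (t := 3/2) ⟨by norm_num, by norm_num⟩
  simp only [phiTilde, hG.one] at key
  norm_num at key h₅₃ h₃₂
  rw [h₅₃, h₃₂] at key
  have hG₂ := hG.one_lt_apply one_lt_two
  have hq : (G 2 - 1) * (G 2 - 2) = 0 := by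
    field_simp at key
    linear_combination -key
  rcases mul_eq_zero.1 hq with h | h <;> linarith

end IsPhiFun

/-- if `G` is a convex φ-function with `‖f‖_{1,G} = ‖f‖_{L¹}` for every
measurable `f` on `[0,1]`, then `G(t) = t` for all `t ≥ 0`. -/
theorem stmt_7 (G : ℝ → ℝ) (hG : IsPhiFun G) (hconv : ConvexOn ℝ (Ici 0) G)
    (h : ∀ f : ℝ → ℝ, Measurable f →
      olNorm (fun t => t) G f = ∫ x in Icc (0:ℝ) 1, |f x|) :
    ∀ t : ℝ, 0 ≤ t → G t = t := by
  have hid : ∀ a ∈ Icc (0:ℝ) 1, G a = a := fun a ha => hG.eq_self_of_mem_Icc hconv h ha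
  have h₂ := hG.apply_two h hid
  intro t ht
  rcases le_total t 1 with ht₁ | ht₁
  · exact hid t ⟨ht, ht₁⟩
  rcases le_total t 2 with ht₂ | ht₂
  · have := hG.chord_identity h hid one_lt_two ⟨ht₁, ht₂⟩
    rw [h₂] at this
    linarith
  · have := hG.chord_identity h hid (one_lt_two.trans_le ht₂) ⟨one_le_two, ht₂⟩
    rw [h₂] at this
    linarith
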